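/- The number a(d) of combinators over {M} of degree d avoiding the factor (x_1 x_2)(x_1 x_2) satisfies a(0) = a(1) = 1 and, for d >= 2, a(d) = b(d-1) - [d odd] * a((d-1)/2), where b(d) = sum_{i=0}^{d} a(i) a(d-i). The first values are 1, 1, 2, 4, 12, 34, 108, 344. -/

import Mathlib

inductive MTerm : Type
  | M : MTerm
  | var : ℕ → MTerm
  | app : MTerm → MTerm → MTerm

/-- One-step rewrite of the Mockingbird system: replace a subterm `M s` by `s s`. -/
inductive MStep : MTerm → MTerm → Prop
  | mock (s : MTerm) : MStep (.app .M s) (.app s s)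
  | left {t t' : MTerm} (u : MTerm) : MStep t t' → MStep (.app t u) (.app t' u)
  | right (u : MTerm) {t t' : MTerm} : MStep t t' → MStep (.app u t) (.app u t')

/-- Rewrite order: reflexive-transitive closure of `MStep`. -/
def MLe : MTerm → MTerm → Prop := Relation.ReflTransGen MStep

/-- A term is a combinator when it contains no variable. -/
def NoVar : MTerm → Prop
  | .M => True
  | .var _ => False
  | .app a b => NoVar a ∧ NoVar b

/-- Subterm (factor) relation. -/
inductive MSub : MTerm → MTerm → Prop
  | refl (t : MTerm) : MSub t t
  | left {s a : MTerm} (b : MTerm) : MSub s a → MSub s (.app a b)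
  | right (a : MTerm) {s b : MTerm} : MSub s b → MSub s (.app a b)

/-- Height: maximal number of internal nodes on a root-to-leaf path. -/
def ht : MTerm → ℕ
  | .M => 0
  | .var _ => 0
  | .app a b => max (ht a) (ht b) + 1

/-- Degree: number of application (internal) nodes. -/
def deg : MTerm → ℕ
  | .M => 0
  | .var _ => 0
  | .app a b => deg a + deg b + 1

/-- Number of combinators over {M} of degree d avoiding the factor (x₁ x₂)(x₁ x₂). -/
noncomputable def aCount (d : ℕ) : ℕ :=
  Nat.card {t : MTerm // NoVar t ∧ deg t = d ∧
    ∀ u v : MTerm, ¬ MSub (.app (.app u v) (.app u v)) t}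

/-- b(d) = ∑_{i=0}^{d} a(i) a(d-i). -/
noncomputable def bCount (d : ℕ) : ℕ := ∑ i ∈ Finset.range (d + 1), aCount i * aCount (d - i)

/-! A combinator of degree `d + 1` is an application `a b` with `deg a + deg b = d`, and it avoids
the square iff `a` and `b` do and `a b` is not itself a square, i.e. unless `a = b` is an
application. So the avoiding combinators of degree `d + 1` are the `b(d)` pairs of avoiding factors
minus the diagonal pairs `(a, a)` with `deg a = d / 2 ≥ 1`, of which there are `a(d / 2)` when `d`
is even and positive, and none otherwise. -/

deriving instance DecidableEq for MTerm

open Finset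

def AvoidsSquare (t : MTerm) : Prop :=
  ∀ u v : MTerm, ¬ MSub (.app (.app u v) (.app u v)) t

lemma avoidsSquare_M : AvoidsSquare .M := by
  intro u v h
  cases h

/-- `deg a = 0` says that `a` is not an application. -/
lemma avoidsSquare_app_iff {a b : MTerm} :
    AvoidsSquare (.app a b) ↔ AvoidsSquare a ∧ AvoidsSquare b ∧ (a = b → deg a = 0) := by
  constructor
  · intro h
    refine ⟨fun u v hs => h u v (.left b hs), fun u v hs => h u v (.right a hs), ?_⟩
    rintro rfl
    cases a with
    | M => rfl
    | var n => rfl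
    | app u v => exact absurd (.refl _) (h u v)
  · rintro ⟨ha, hb, hab⟩ u v hs
    cases hs with
    | refl => exact absurd (hab rfl) (by simp [deg])
    | left _ hs => exact ha u v hs
    | right _ hs => exact hb u v hs

def avoiders : ℕ → Finset MTerm
  | 0 => {.M}
  | d + 1 => (((univ : Finset (Fin (d + 1))).biUnion fun i => avoiders i ×ˢ avoiders (d - i)).filter
      fun q => q.1 = q.2 → deg q.1 = 0).image fun q => .app q.1 q.2

def avoiderPairs (d : ℕ) : Finset (MTerm × MTerm) :=
  (univ : Finset (Fin (d + 1))).biUnion fun i => avoiders i ×ˢ avoiders (d - i)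

lemma avoiders_succ (d : ℕ) :
    avoiders (d + 1) =
      ((avoiderPairs d).filter fun q => q.1 = q.2 → deg q.1 = 0).image fun q => .app q.1 q.2 := by
  rw [avoiders, avoiderPairs]

lemma mem_avoiders (d : ℕ) (t : MTerm) :
    t ∈ avoiders d ↔ NoVar t ∧ deg t = d ∧ AvoidsSquare t := by
  induction d using Nat.strong_induction_on generalizing t with
  | _ d ih =>
  match d, t with
  | 0, t =>
    cases t <;> simp [avoiders, NoVar, deg, avoidsSquare_M]
  | d + 1, .M => simp [avoiders_succ, deg]
  | d + 1, .var n => simp [avoiders_succ, NoVar]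
  | d + 1, .app a b =>
    simp only [avoiders_succ, avoiderPairs, mem_image, mem_filter, mem_biUnion, mem_univ, true_and,
      mem_product, MTerm.app.injEq, Prod.exists, exists_eq_right_right, NoVar, deg,
      avoidsSquare_app_iff, exists_eq_right]
    constructor
    · rintro ⟨⟨i, ha, hb⟩, hab⟩
      rw [ih i i.2 a] at ha
      rw [ih (d - i) (by omega) b] at hb
      exact ⟨⟨ha.1, hb.1⟩, by omega, ha.2.2, hb.2.2, hab⟩
    · rintro ⟨⟨ha, hb⟩, hdeg, ha', hb', hab⟩
      refine ⟨⟨⟨deg a, by omega⟩, ?_, ?_⟩, hab⟩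
      · exact (ih _ (by omega) a).2 ⟨ha, rfl, ha'⟩
      · exact (ih _ (by omega) b).2 ⟨hb, by dsimp only; omega, hb'⟩

lemma aCount_eq_card (d : ℕ) : aCount d = #(avoiders d) := by
  rw [← Nat.card_eq_finsetCard]
  exact Nat.card_congr (Equiv.subtypeEquivRight fun t => (mem_avoiders d t).symm)

lemma mem_avoiderPairs {d : ℕ} {a b : MTerm} :
    (a, b) ∈ avoiderPairs d ↔ a ∈ avoiders (deg a) ∧ b ∈ avoiders (deg b) ∧ deg a + deg b = d := by
  simp only [avoiderPairs, mem_biUnion, mem_univ, true_and, mem_product]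
  constructor
  · rintro ⟨i, ha, hb⟩
    have hai := ((mem_avoiders _ a).1 ha).2.1
    have hbi := ((mem_avoiders _ b).1 hb).2.1
    exact ⟨hai ▸ ha, hbi ▸ hb, by omega⟩
  · rintro ⟨ha, hb, hd⟩
    exact ⟨⟨deg a, by omega⟩, ha, (by omega : deg b = d - deg a) ▸ hb⟩

lemma card_avoiderPairs (d : ℕ) : #(avoiderPairs d) = bCount d := by
  rw [avoiderPairs, card_biUnion]
  · simp only [card_product, aCount_eq_card, bCount]
    exact Fin.sum_univ_eq_sum_range (fun i => #(avoiders i) * #(avoiders (d - i))) (d + 1)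
  · intro i _ j _ hij
    refine disjoint_left.2 fun q hi hj => hij (Fin.ext ?_)
    rw [← ((mem_avoiders _ q.1).1 (mem_product.1 hi).1).2.1,
      ← ((mem_avoiders _ q.1).1 (mem_product.1 hj).1).2.1]

lemma card_filter_square_avoiderPairs (d : ℕ) :
    #((avoiderPairs d).filter fun q => ¬(q.1 = q.2 → deg q.1 = 0)) =
      if Even d ∧ d ≠ 0 then aCount (d / 2) else 0 := by
  split_ifs with hd
  · rw [aCount_eq_card, ← card_image_of_injective (f := fun a : MTerm => (a, a)) _
      fun _ _ h => congrArg Prod.fst h]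
    congr 1
    ext ⟨a, b⟩
    simp only [mem_filter, mem_avoiderPairs, mem_image, Prod.mk.injEq, Classical.not_imp]
    constructor
    · rintro ⟨⟨ha, -, hdeg⟩, rfl, ha0⟩
      exact ⟨a, (by omega : deg a = d / 2) ▸ ha, rfl, rfl⟩
    · rintro ⟨a, ha, rfl, rfl⟩
      have hdeg := ((mem_avoiders _ a).1 ha).2.1
      obtain ⟨k, rfl⟩ := hd.1
      exact ⟨⟨hdeg ▸ ha, hdeg ▸ ha, by omega⟩, rfl, by omega⟩
  · rw [card_eq_zero, filter_eq_empty_iff]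
    rintro ⟨a, b⟩ hq hab
    obtain ⟨-, -, hd'⟩ := mem_avoiderPairs.1 hq
    obtain ⟨rfl, ha0⟩ : a = b ∧ deg a ≠ 0 := Classical.not_imp.1 hab
    exact hd ⟨⟨deg a, by omega⟩, by omega⟩

lemma aCount_succ_add (d : ℕ) :
    aCount (d + 1) + (if Even d ∧ d ≠ 0 then aCount (d / 2) else 0) = bCount d := by
  have app_injective : Function.Injective fun q : MTerm × MTerm => MTerm.app q.1 q.2 :=
    fun _ _ h => Prod.ext (MTerm.app.inj h).1 (MTerm.app.inj h).2
  rw [aCount_eq_card, avoiders_succ, card_image_of_injective _ app_injective,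
    ← card_filter_square_avoiderPairs, card_filter_add_card_filter_not, card_avoiderPairs]

lemma aCount_zero : aCount 0 = 1 := by
  rw [aCount_eq_card, avoiders, card_singleton]

lemma aCount_one : aCount 1 = 1 := by
  simpa [bCount, aCount_zero] using aCount_succ_add 0

lemma aCount_eq_bCount_sub {d : ℕ} (hd : 2 ≤ d) :
    aCount d = bCount (d - 1) - (if Odd d then aCount ((d - 1) / 2) else 0) := by
  obtain ⟨e, rfl⟩ : ∃ e, d = e + 1 := ⟨d - 1, by omega⟩
  have h := aCount_succ_add e
  simp only [show e ≠ 0 by omega, ne_eq, not_false_eq_true, and_true] at h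
  simp only [Nat.odd_add_one, Nat.not_odd_iff_even, Nat.add_sub_cancel]
  omega

/-- a(0) = a(1) = 1 and, for d ≥ 2, a(d) = b(d-1) - [d odd]·a((d-1)/2);
the first values are 1, 1, 2, 4, 12, 34, 108, 344. -/
theorem avoid_square_recurrence :
    aCount 0 = 1 ∧ aCount 1 = 1 ∧
    (∀ d : ℕ, 2 ≤ d →
      aCount d = bCount (d - 1) - (if Odd d then aCount ((d - 1) / 2) else 0)) ∧
    aCount 2 = 2 ∧ aCount 3 = 4 ∧ aCount 4 = 12 ∧ aCount 5 = 34 ∧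
    aCount 6 = 108 ∧ aCount 7 = 344 := by
  have a0 := aCount_zero
  have a1 := aCount_one
  have a2 : aCount 2 = 2 := by
    rw [aCount_eq_bCount_sub le_rfl]; simp [bCount, sum_range_succ, Nat.odd_iff, *]
  have a3 : aCount 3 = 4 := by
    rw [aCount_eq_bCount_sub (by norm_num)]; simp [bCount, sum_range_succ, Nat.odd_iff, *]
  have a4 : aCount 4 = 12 := by
    rw [aCount_eq_bCount_sub (by norm_num)]; simp [bCount, sum_range_succ, Nat.odd_iff, *]
  have a5 : aCount 5 = 34 := by
    rw [aCount_eq_bCount_sub (by norm_num)]; simp [bCount, sum_range_succ, Nat.odd_iff, *]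
  have a6 : aCount 6 = 108 := by
    rw [aCount_eq_bCount_sub (by norm_num)]; simp [bCount, sum_range_succ, Nat.odd_iff, *]
  have a7 : aCount 7 = 344 := by
    rw [aCount_eq_bCount_sub (by norm_num)]; simp [bCount, sum_range_succ, Nat.odd_iff, *]
  exact ⟨a0, a1, fun d hd => aCount_eq_bCount_sub hd, a2, a3, a4, a5, a6, a7⟩
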